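/- On the standard n-simplex Δⁿ = {(t₀,…,tₙ) : tᵢ ≥ 0, Σtᵢ = 1}, the elementary Whitney forms ω_{i₀…i_k} = k! Σ_{j=0}^{k} (−1)^j t_{i_j} dt_{i₀} ∧ ⋯ ∧ \widehat{dt_{i_j}} ∧ ⋯ ∧ dt_{i_k} satisfy the differential identity d ω_{i₀…i_k} = Σ_{i=0}^{n} ω_{i i₀ … i_k}. -/

import Mathlib

/-!
Differentiating the `j`-th summand `t_{σ j} · dt_{σ 0} ⋯ (omit j) ⋯ dt_{σ k}` of `ω_σ` leaves only
`dt_{σ j}` times the remaining product (the differential kills products of `dt`'s), and moving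
`dt_{σ j}` back to position `j` costs the sign `(-1)^j`; so `D ω_σ = (k+1)! dt_{σ 0} ⋯ dt_{σ k}`.
Expanding `ω_{i σ}` along its first index, `Σ tᵢ = 1` collects the `t_i` terms into the same
`(k+1)! dt_{σ 0} ⋯ dt_{σ k}`, while `Σ dtᵢ = 0` kills all the others.
-/

/-- The elementary Whitney form `ω_{σ(0)…σ(k)} = k! Σⱼ (−1)^j t_{σ(j)}
dt_{σ(0)} ⋯ (omit j) ⋯ dt_{σ(k)}`, written in an abstract algebra `A` containing
the barycentric coordinates `t i` and their differentials `dt i`. -/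
noncomputable def whitneyForm {A : Type*} [Ring A] [Algebra ℝ A] {n : ℕ}
    (t dt : Fin (n + 1) → A) (k : ℕ) (σ : Fin (k + 1) → Fin (n + 1)) : A :=
  (k.factorial : ℝ) • ∑ j : Fin (k + 1), ((-1 : ℝ) ^ (j : ℕ)) •
    (t (σ j) * ((List.ofFn fun l : Fin (k + 1) => dt (σ l)).eraseIdx j).prod)

namespace List

variable {A : Type*} [Ring A]

theorem apply_prod_eq_zero {D : A → A} (hD1 : D 1 = 0) :
    ∀ {L : List A}, (∀ a ∈ L, ∀ b, D (a * b) = -(a * D b)) → D L.prod = 0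
  | [], _ => hD1
  | a :: L, hL => by
    rw [prod_cons, hL a mem_cons_self,
      apply_prod_eq_zero hD1 fun b hb => hL b (mem_cons_of_mem a hb), mul_zero, neg_zero]

theorem getElem_mul_prod_eraseIdx_of_anticomm :
    ∀ {L : List A}, (∀ a ∈ L, ∀ b ∈ L, a * b = -(b * a)) →
      ∀ (j : ℕ) (hj : j < L.length), L[j] * (L.eraseIdx j).prod = (-1 : ℤ) ^ j • L.prod
  | a :: L, _, 0, _ => by simp
  | a :: L, hL, j + 1, hj => by
    have hj : j < L.length := by simpa using hj
    have ih := getElem_mul_prod_eraseIdx_of_anticomm (L := L)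
      (fun x hx y hy => hL x (mem_cons_of_mem a hx) y (mem_cons_of_mem a hy)) j hj
    have swap : L[j] * a = -(a * L[j]) := hL _ (mem_cons_of_mem a (getElem_mem _)) a mem_cons_self
    rw [getElem_cons_succ, eraseIdx_cons_succ, prod_cons, prod_cons, ← mul_assoc, swap, neg_mul,
      mul_assoc, ih, mul_smul_comm, pow_succ, mul_neg_one, neg_smul]

end List

section Whitney

variable {A : Type*} [Ring A] [Algebra ℝ A] {n : ℕ} (t dt : Fin (n + 1) → A)

theorem whitneyForm_cons (k : ℕ) (σ : Fin (k + 1) → Fin (n + 1)) (i : Fin (n + 1)) :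
    whitneyForm t dt (k + 1) (Fin.cons i σ) = ((k + 1).factorial : ℝ) •
      (t i * (List.ofFn fun l => dt (σ l)).prod - ∑ j : Fin (k + 1), ((-1 : ℝ) ^ (j : ℕ)) •
        (t (σ j) * (dt i * ((List.ofFn fun l => dt (σ l)).eraseIdx j).prod))) := by
  simp only [whitneyForm, Fin.sum_univ_succ, List.ofFn_succ, Fin.cons_zero, Fin.cons_succ,
    Fin.val_zero, Fin.val_succ, pow_zero, one_smul, List.eraseIdx_cons_zero,
    List.eraseIdx_cons_succ, List.prod_cons, pow_succ, mul_neg_one, neg_smul,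
    Finset.sum_neg_distrib, sub_eq_add_neg]

theorem sum_whitneyForm_cons (hsum_t : ∑ i, t i = 1) (hsum_dt : ∑ i, dt i = 0) (k : ℕ)
    (σ : Fin (k + 1) → Fin (n + 1)) :
    ∑ i, whitneyForm t dt (k + 1) (Fin.cons i σ) =
      ((k + 1).factorial : ℝ) • (List.ofFn fun l => dt (σ l)).prod := by
  have hdt (a b : A) : ∑ i, a * (dt i * b) = 0 := by
    rw [← Finset.mul_sum, ← Finset.sum_mul, hsum_dt, zero_mul, mul_zero]
  simp only [whitneyForm_cons, ← Finset.smul_sum, Finset.sum_sub_distrib, ← Finset.sum_mul, hsum_t,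
    one_mul]
  rw [Finset.sum_comm]
  simp only [← Finset.smul_sum, hdt, smul_zero, Finset.sum_const_zero, sub_zero]

theorem apply_whitneyForm (D : A →ₗ[ℝ] A) (hD1 : D 1 = 0)
    (hLeib0 : ∀ i a, D (t i * a) = dt i * a + t i * D a)
    (hLeib1 : ∀ i a, D (dt i * a) = -(dt i * D a))
    (hanti : ∀ i j, dt i * dt j = -(dt j * dt i)) (k : ℕ) (σ : Fin (k + 1) → Fin (n + 1)) :
    D (whitneyForm t dt k σ) = ((k + 1).factorial : ℝ) • (List.ofFn fun l => dt (σ l)).prod := by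
  set L := List.ofFn fun l : Fin (k + 1) => dt (σ l)
  have hLeib1L : ∀ a ∈ L, ∀ b, D (a * b) = -(a * D b) := by
    simp only [L, List.mem_ofFn]
    rintro _ ⟨l, rfl⟩
    exact hLeib1 (σ l)
  have hantiL : ∀ a ∈ L, ∀ b ∈ L, a * b = -(b * a) := by
    simp only [L, List.mem_ofFn]
    rintro _ ⟨l, rfl⟩ _ ⟨m, rfl⟩
    exact hanti (σ l) (σ m)
  have hterm (j : Fin (k + 1)) :
      D ((-1 : ℝ) ^ (j : ℕ) • (t (σ j) * (L.eraseIdx j).prod)) = L.prod := by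
    have hj : (j : ℕ) < L.length := by simp only [L, List.length_ofFn, j.isLt]
    rw [map_smul, hLeib0,
      List.apply_prod_eq_zero hD1 fun a ha => hLeib1L a (List.mem_of_mem_eraseIdx ha), mul_zero,
      add_zero]
    have hmove := L.getElem_mul_prod_eraseIdx_of_anticomm hantiL j hj
    simp only [L, List.getElem_ofFn] at hmove
    rw [hmove, ← Int.cast_smul_eq_zsmul ℝ, smul_smul, Int.cast_pow, Int.cast_neg, Int.cast_one,
      ← mul_pow, neg_one_mul, neg_neg, one_pow, one_smul]
  rw [whitneyForm, map_smul, map_sum, Finset.sum_congr rfl fun j _ => hterm j, Finset.sum_const,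
    Finset.card_univ, Fintype.card_fin, ← Nat.cast_smul_eq_nsmul ℝ, smul_smul, Nat.factorial_succ,
    Nat.cast_mul, mul_comm]

end Whitney

theorem whitneyForm_differential_general
    (A : Type*) [Ring A] [Algebra ℝ A] (n : ℕ)
    (t dt : Fin (n + 1) → A)
    (D : A →ₗ[ℝ] A)
    (hD1 : D 1 = 0)
    (hLeib0 : ∀ i a, D (t i * a) = dt i * a + t i * D a)
    (hLeib1 : ∀ i a, D (dt i * a) = - (dt i * D a))
    (hanti : ∀ i j, dt i * dt j = - (dt j * dt i))
    (hsum_t : ∑ i, t i = 1)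
    (hsum_dt : ∑ i, dt i = 0)
    (k : ℕ) (σ : Fin (k + 1) → Fin (n + 1)) :
    D (whitneyForm t dt k σ) =
      ∑ i : Fin (n + 1), whitneyForm t dt (k + 1) (Fin.cons i σ) := by
  rw [apply_whitneyForm t dt D hD1 hLeib0 hLeib1 hanti, sum_whitneyForm_cons t dt hsum_t hsum_dt]

/-- In the de Rham algebra of the `n`-simplex — abstracted as an
`ℝ`-algebra `A` with elements `t i`, `dt i` and a differential `D` satisfying the
Leibniz rule, `D(tᵢ) = dtᵢ`, `D(dtᵢ) = 0`, subject to the simplex relations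
`Σ tᵢ = 1` and `Σ dtᵢ = 0` — the elementary Whitney forms satisfy
`d ω_{i₀…i_k} = Σᵢ ω_{i i₀…i_k}`. -/
theorem whitneyForm_differential
    (A : Type*) [Ring A] [Algebra ℝ A] (n : ℕ)
    (t dt : Fin (n + 1) → A)
    (D : A →ₗ[ℝ] A)
    (hD1 : D 1 = 0)
    (hDt : ∀ i, D (t i) = dt i)
    (hDdt : ∀ i, D (dt i) = 0)
    (hLeib0 : ∀ i a, D (t i * a) = dt i * a + t i * D a)
    (hLeib1 : ∀ i a, D (dt i * a) = - (dt i * D a))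
    (htcomm : ∀ i a, t i * a = a * t i)
    (hanti : ∀ i j, dt i * dt j = - (dt j * dt i))
    (hsum_t : ∑ i, t i = 1)
    (hsum_dt : ∑ i, dt i = 0)
    (k : ℕ) (σ : Fin (k + 1) → Fin (n + 1)) :
    D (whitneyForm t dt k σ) =
      ∑ i : Fin (n + 1), whitneyForm t dt (k + 1) (Fin.cons i σ) :=
  whitneyForm_differential_general A n t dt D hD1 hLeib0 hLeib1 hanti hsum_t hsum_dt k σ
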